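/- Let k ≥ 1 and let G be the dicyclic group of order 16(k+1), with presentation ⟨x, y | x^{4(2k+2)} = 1, y² = x^{2(2k+2)}, y x y⁻¹ = x⁻¹⟩ (in Mathlib, G = QuaternionGroup (4k+4), with x a generator of order 8(k+1) and y an element with y² = x^{4(k+1)} and yxy⁻¹ = x⁻¹). Then the subgroup of G generated by the two elements x^{k+1} and x^k·y is isomorphic to the dicyclic group of order 16 (Mathlib: QuaternionGroup 4). -/
import Mathlib

namespace DicAux

open QuaternionGroup

/-- The additive hom `ZMod 8 →+ ZMod (8k+8)`, `i ↦ (k+1)·i`. -/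
noncomputable def f (k : ℕ) : ZMod 8 →+ ZMod (2 * (4 * k + 4)) :=
  ZMod.lift 8 ⟨zmultiplesHom _ ((k + 1 : ℕ) : ZMod (2 * (4 * k + 4))), by
    simp only [zmultiplesHom_apply, zsmul_eq_mul]
    have h : ((2 * (4 * k + 4) : ℕ) : ZMod (2 * (4 * k + 4))) = 0 := ZMod.natCast_self _
    push_cast at h ⊢
    linear_combination h⟩

lemma f_natCast (k m : ℕ) :
    f k ((m : ℕ) : ZMod 8) = ((m * (k + 1) : ℕ) : ZMod (2 * (4 * k + 4))) := by
  have : (((m : ℤ) : ZMod 8)) = ((m : ℕ) : ZMod 8) := by push_cast; ring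
  rw [← this, f, ZMod.lift_coe]
  simp only [zmultiplesHom_apply, zsmul_eq_mul]
  push_cast
  ring

noncomputable def phi (k : ℕ) : QuaternionGroup 4 →* QuaternionGroup (4 * k + 4) where
  toFun := fun g => match g with
    | .a i => .a (f k i)
    | .xa i => .xa (f k i - (k : ZMod (2 * (4 * k + 4))))
  map_one' := by
    show QuaternionGroup.a _ = _
    rw [one_def, map_zero]
  map_mul' := by
    have h4 : f k ((4 : ℕ) : ZMod 8) = ((4 * k + 4 : ℕ) : ZMod (2 * (4 * k + 4))) := by
      rw [f_natCast, show 4 * (k + 1) = 4 * k + 4 by ring]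
    rintro (i | i) (j | j) <;>
      simp only [a_mul_a, a_mul_xa, xa_mul_a, xa_mul_xa, map_add, map_sub, h4] <;>
      (congr 1; ring)

lemma f_inj (k : ℕ) : Function.Injective (f k) := by
  rw [injective_iff_map_eq_zero]
  intro i hi
  have hiv : ((i.val : ℕ) : ZMod 8) = i := ZMod.natCast_rightInverse i
  rw [← hiv, f_natCast] at hi
  rw [ZMod.natCast_eq_zero_iff] at hi
  rw [show 2 * (4 * k + 4) = 8 * (k + 1) by ring] at hi
  have h8 : 8 ∣ i.val := (Nat.mul_dvd_mul_iff_right (Nat.succ_pos k)).mp hi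
  have hlt : i.val < 8 := i.val_lt
  have h0 : i.val = 0 := by omega
  rw [← hiv, h0, Nat.cast_zero]

lemma phi_inj (k : ℕ) : Function.Injective (phi k) := by
  rintro (i | i) (j | j) h <;>
    simp only [phi, MonoidHom.coe_mk, OneHom.coe_mk] at h
  · injection h with h'
    exact congrArg _ (f_inj k h')
  · injection h
  · injection h
  · injection h with h'
    exact congrArg _ (f_inj k (by linear_combination h'))

lemma gen_top : Subgroup.closure ({QuaternionGroup.a 1, QuaternionGroup.xa 0} :
    Set (QuaternionGroup 4)) = ⊤ := by
  rw [eq_top_iff]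
  rintro (i | i) -
  · rw [show (QuaternionGroup.a i : QuaternionGroup 4) = QuaternionGroup.a 1 ^ i.val by
      rw [a_one_pow, ZMod.natCast_rightInverse i]]
    exact pow_mem (Subgroup.subset_closure (Set.mem_insert _ _)) _
  · rw [show (QuaternionGroup.xa i : QuaternionGroup 4) =
        QuaternionGroup.xa 0 * QuaternionGroup.a 1 ^ i.val by
      rw [a_one_pow, ZMod.natCast_rightInverse i, xa_mul_a, zero_add]]
    exact mul_mem (Subgroup.subset_closure (Set.mem_insert_of_mem _ rfl))
      (pow_mem (Subgroup.subset_closure (Set.mem_insert _ _)) _)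

lemma range_eq (k : ℕ) : (phi k).range = Subgroup.closure
    {(QuaternionGroup.a 1 : QuaternionGroup (4 * k + 4)) ^ (k + 1),
      (QuaternionGroup.a 1 : QuaternionGroup (4 * k + 4)) ^ k * QuaternionGroup.xa 0} := by
  rw [MonoidHom.range_eq_map, ← gen_top, MonoidHom.map_closure, Set.image_pair]
  congr 1
  have h1 : phi k (QuaternionGroup.a 1) =
      (QuaternionGroup.a 1 : QuaternionGroup (4 * k + 4)) ^ (k + 1) := by
    show QuaternionGroup.a _ = _
    rw [a_one_pow]
    congr 1
    rw [show (1 : ZMod 8) = ((1 : ℕ) : ZMod 8) from by norm_num, f_natCast, Nat.one_mul]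
  have h2 : phi k (QuaternionGroup.xa 0) =
      (QuaternionGroup.a 1 : QuaternionGroup (4 * k + 4)) ^ k * QuaternionGroup.xa 0 := by
    show QuaternionGroup.xa _ = _
    rw [a_one_pow, a_mul_xa, map_zero]
  rw [h1, h2]

end DicAux

/-- Let `k ≥ 1` and let `G = QuaternionGroup (4k+4)` be the dicyclic group of order
`16(k+1)`, with `x = a 1` (a generator of order `8(k+1)`) and `y = xa 0` (so that
`y² = x^{4(k+1)}` and `y·x·y⁻¹ = x⁻¹`).  Then the subgroup of `G` generated by
`x^{k+1}` and `x^k·y` is isomorphic to the dicyclic group of order 16,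
`QuaternionGroup 4`. -/
theorem dicyclic_subgroup_iso (k : ℕ) (hk : 1 ≤ k) :
    Nonempty
      ((Subgroup.closure
          {(QuaternionGroup.a 1 : QuaternionGroup (4 * k + 4)) ^ (k + 1),
            (QuaternionGroup.a 1 : QuaternionGroup (4 * k + 4)) ^ k * QuaternionGroup.xa 0}) ≃*
        QuaternionGroup 4) := by
  have e := MonoidHom.ofInjective (DicAux.phi_inj k)
  rw [DicAux.range_eq k] at e
  exact ⟨e.symm⟩
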